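/- (Monotonicity in the volume under the maximal boundary condition) Let E be a countable, totally ordered measurable color space having a greatest element u, and let γ be a partially oriented specification on Ω=E^S satisfying the FKG hypothesis: for all y∈S, a∈E, and ω≤η, γ_y({σ: σ_y≥a},ω) ≤ γ_y({σ: σ_y≥a},η). Denote by ⊕ the configuration with ⊕_x=u for all x∈S. Then for all time boxes Λ,Δ with Λ⊆Δ and Λ₊∩Δ=∅, and every bounded increasing ℱ_Λ-measurable function f, γ_Δ(f,⊕) ≤ γ_Λ(f,⊕). -/

import Mathlib

open MeasureTheory Filter Topology
open scoped ENNReal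

namespace POCpaper

section Geometry

variable {S : Type*} [PartialOrder S]

/-- The past of a set of sites. -/
def past (Υ : Set S) : Set S := {x | x ∉ Υ ∧ ∃ y ∈ Υ, x < y}

/-- The future of a set of sites. -/
def future (Υ : Set S) : Set S := {x | x ∉ Υ ∧ ∃ y ∈ Υ, y < x}

/-- The outer time of a set of sites: sites incomparable with every site of the set. -/
def outerT (Υ : Set S) : Set S := {x | ∀ y ∈ Υ, ¬ x ≤ y ∧ ¬ y ≤ x}

/-- Maximal elements of a set. -/
def sMax (A : Set S) : Set S := {x | x ∈ A ∧ ∀ y ∈ A, ¬ x < y}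

/-- Minimal elements of a set. -/
def sMin (A : Set S) : Set S := {x | x ∈ A ∧ ∀ y ∈ A, ¬ y < x}

/-- The (strict) past of a single site. -/
def pastPt (x : S) : Set S := {y | y < x}

/-- The (strict) future of a single site. -/
def futPt (x : S) : Set S := {y | x < y}

/-- A time box: a finite set whose past and future are disjoint. -/
def IsTimeBox (Λ : Finset S) : Prop := past (Λ : Set S) ∩ future (Λ : Set S) = ∅

/-- `⌊Λ⌋ = S ∖ Λ₊`. -/
def floorB (Λ : Finset S) : Set S := (future (Λ : Set S))ᶜ

/-- `Λ° = Λ₋ ∪ Λ*`. -/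
def ringB (Λ : Finset S) : Set S := past (Λ : Set S) ∪ outerT (Λ : Set S)

/-- The nearest past `∂Λ` of a box. -/
def nearPast (Λ : Finset S) : Set S := (⋃ x ∈ Λ, sMax (pastPt x)) \ (Λ : Set S)

/-- A slice: a (finite) set of pairwise incomparable sites. -/
def IsSliceSet (A : Set S) : Prop := A.Finite ∧ ∀ x ∈ A, ∀ y ∈ A, x ≠ y → ¬ x ≤ y

end Geometry

/-- The standing assumptions on the site space `S`. -/
structure Standing (S : Type*) [PartialOrder S] : Prop where
  finMax : ∀ x : S, (sMax (pastPt x)).Finite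
  finMin : ∀ x : S, (sMin (futPt x)).Finite
  reachMax : ∀ x y : S, y < x → ∃ y₀ ∈ sMax (pastPt x), y ≤ y₀ ∧ y₀ < x
  reachMin : ∀ x z : S, x < z → ∃ z₀ ∈ sMin (futPt x), z₀ ≤ z ∧ x < z₀
  noMinimal : ∀ x : S, ∃ y : S, y < x

/-- A function is bounded. -/
def Bounded {α : Type*} (f : α → ℝ) : Prop := ∃ C : ℝ, ∀ a, |f a| ≤ C

section Kernels

variable {S : Type*} [PartialOrder S] (E : Type*) [MeasurableSpace E]

/-- `ℱ_Υ`: the sub-σ-algebra of the product σ-algebra generated by the coordinates in `Υ`. -/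
def F (Υ : Set S) : MeasurableSpace (S → E) :=
  MeasurableSpace.comap (fun ω (y : Υ) => ω y) MeasurableSpace.pi

/-- A measure on `Ω` with the σ-algebra `ℱ_{⌊Λ⌋}`. -/
abbrev BoxMeasure (Λ : Finset S) := @Measure (S → E) (F E (floorB Λ))

/-- A proper oriented kernel on a time box `Λ`. -/
structure IsProperKernel (Λ : Finset S) (κ : (S → E) → BoxMeasure E Λ) : Prop where
  prob : ∀ ω, IsProbabilityMeasure (κ ω)
  measOuter : ∀ A : Set (S → E), MeasurableSet[F E (floorB Λ)] A →
    Measurable[F E (ringB Λ)] fun ω => κ ω A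
  measPast : ∀ A : Set (S → E), MeasurableSet[F E ((Λ : Set S))] A →
    Measurable[F E (past (Λ : Set S))] fun ω => κ ω A
  proper : ∀ B : Set (S → E), MeasurableSet[F E (ringB Λ)] B →
    ∀ ω, κ ω B = B.indicator (fun _ => (1 : ℝ≥0∞)) ω

/-- A partially oriented specification (POS). -/
structure IsPOS (γ : ∀ Λ : Finset S, (S → E) → BoxMeasure E Λ) : Prop where
  proper : ∀ Λ : Finset S, IsTimeBox Λ → IsProperKernel E Λ (γ Λ)
  consist : ∀ Λ Δ : Finset S, IsTimeBox Λ → IsTimeBox Δ → Λ ⊆ Δ →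
    ∀ h : (S → E) → ℝ, Measurable[F E (floorB Λ)] h → Bounded h →
      ∀ ω : S → E, ∫ σ, (∫ ξ, h ξ ∂(γ Λ σ)) ∂(γ Δ ω) = ∫ σ, h σ ∂(γ Δ ω)

/-- A measure consistent with a POS: a partially oriented chain (γ-POC). -/
def IsPOC (γ : ∀ Λ : Finset S, (S → E) → BoxMeasure E Λ) (μ : Measure (S → E)) : Prop :=
  IsProbabilityMeasure μ ∧
  ∀ Λ : Finset S, IsTimeBox Λ →
    ∀ h : (S → E) → ℝ, Measurable[F E (floorB Λ)] h → Bounded h →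
      ∫ σ, (∫ ξ, h ξ ∂(γ Λ σ)) ∂μ = ∫ σ, h σ ∂μ

/-- The tail σ-algebra `ℱ₋∞ = ⋂_{Λ time box} ℱ_{Λ°}`. -/
def tailField : MeasurableSpace (S → E) :=
  ⨅ (Λ : Finset S) (_ : IsTimeBox Λ), F E (ringB Λ)

/-- Extreme points of the convex set `𝒢(γ)`. -/
def IsExtremePOC (γ : ∀ Λ : Finset S, (S → E) → BoxMeasure E Λ) (μ : Measure (S → E)) : Prop :=
  IsPOC E γ μ ∧
  ∀ (t : ℝ≥0∞) (ν₁ ν₂ : Measure (S → E)), 0 < t → t < 1 →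
    IsPOC E γ ν₁ → IsPOC E γ ν₂ → μ = t • ν₁ + (1 - t) • ν₂ → ν₁ = ν₂

/-- A local function: measurable with respect to finitely many coordinates. -/
def IsLocal (f : (S → E) → ℝ) : Prop := ∃ Υ : Finset S, Measurable[F E ((Υ : Set S))] f

/-- A quasilocal function: uniform limit of bounded local functions. -/
def IsQuasilocal (f : (S → E) → ℝ) : Prop :=
  ∀ ε : ℝ, 0 < ε → ∃ g : (S → E) → ℝ, IsLocal E g ∧ Bounded g ∧ ∀ ω, |f ω - g ω| ≤ ε

/-- A local event. -/
def IsLocalEvent (A : Set (S → E)) : Prop := ∃ Υ : Finset S, MeasurableSet[F E ((Υ : Set S))] A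

/-- A quasilocal POS. -/
def IsQuasilocalPOS (γ : ∀ Λ : Finset S, (S → E) → BoxMeasure E Λ) : Prop :=
  IsPOS E γ ∧ ∀ Λ : Finset S, IsTimeBox Λ → ∀ A : Set (S → E), IsLocalEvent E A →
    MeasurableSet[F E (floorB Λ)] A → IsQuasilocal E fun ω => (γ Λ ω A).toReal

/-- A POMM: a Markovian POS, whose kernels depend on the past only through the nearest past. -/
def IsPOMM (γ : ∀ Λ : Finset S, (S → E) → BoxMeasure E Λ) : Prop :=
  IsPOS E γ ∧ ∀ Λ : Finset S, IsTimeBox Λ → ∀ A : Set (S → E),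
    MeasurableSet[F E ((Λ : Set S))] A → Measurable[F E (nearPast Λ)] fun ω => γ Λ ω A

/-- Two configurations agreeing at every site except possibly `x`. -/
def agreeExcept (x : S) (ξ η : S → E) : Prop := ∀ z : S, z ≠ x → ξ z = η z

/-- The oscillation `δ_x(f)` of `f` at the site `x`. -/
noncomputable def osc (x : S) (f : (S → E) → ℝ) : ℝ :=
  sSup {d : ℝ | ∃ ξ η : S → E, agreeExcept E x ξ η ∧ d = |f ξ - f η|}

/-- A dust-rate matrix for the POS `γ`. -/
def IsDustRate (γ : ∀ Λ : Finset S, (S → E) → BoxMeasure E Λ) (α : S → S → ℝ) : Prop :=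
  (∀ ⦃x y : S⦄, x < y → 0 ≤ α y x) ∧
  ∀ y x : S, x < y → ∀ f : (S → E) → ℝ,
    Measurable[F E ({y} : Set S)] f → Bounded f →
      osc E x (fun ω => ∫ ξ, f ξ ∂(γ {y} ω)) ≤ osc E y f * α y x

/-- The Dobrushin dust-rate matrix built from variational distances of single-site kernels. -/
noncomputable def dobMatrix (γ : ∀ Λ : Finset S, (S → E) → BoxMeasure E Λ) (y x : S) : ℝ :=
  sSup {d : ℝ | ∃ ξ η : S → E, agreeExcept E x ξ η ∧
    d = (1 / 2) * ∑' a : E,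
      |((γ {y} ξ) {σ | σ y = a}).toReal - ((γ {y} η) {σ | σ y = a}).toReal|}

/-- The maximal percolation parameters `p_x^γ` of a POMM. -/
noncomputable def percParam (γ : ∀ Λ : Finset S, (S → E) → BoxMeasure E Λ) (x : S) : ℝ :=
  sSup {d : ℝ | ∃ ξ η : S → E,
    d = (1 / 2) * ∑' a : E,
      |((γ {x} ξ) {σ | σ x = a}).toReal - ((γ {x} η) {σ | σ x = a}).toReal|}

end Kernels

section Percolation

variable {S : Type*} [PartialOrder S]

/-- An oriented (towards the past) open path from `x` to `y`. -/
def OpenPath (X : S → Bool) (x y : S) : Prop :=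
  ∃ L : List S, L ≠ [] ∧ L.head? = some x ∧ L.getLast? = some y ∧
    L.Chain' (fun a b => b ∈ sMax (pastPt a)) ∧ ∀ z ∈ L, X z = true

/-- `x` lies in an infinite oriented open cluster: the event `(x → -∞)`. -/
def ToMinusInfinity (X : S → Bool) (x : S) : Prop :=
  ∃ c : ℕ → S, StrictAnti c ∧ ∀ n, OpenPath X x (c n)

/-- `ψ` is the product Bernoulli measure with parameters `p`. -/
def IsBernoulliProduct (p : S → ℝ) (ψ : Measure (S → Bool)) : Prop :=
  IsProbabilityMeasure ψ ∧ ∀ (T : Finset S) (b : S → Bool),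
    ψ {X | ∀ x ∈ T, X x = b x} = ∏ x ∈ T, ENNReal.ofReal (if b x then p x else 1 - p x)

end Percolation

section AuxMeas

variable {S : Type*} {E : Type*} [MeasurableSpace E]

lemma measurable_eval {W : Set S} {z : S} (hz : z ∈ W) :
    Measurable[F E W] (fun σ : S → E => σ z) := by
  have h1 : Measurable[F E W] (fun σ : S → E => fun y : W => σ y) :=
    Measurable.of_comap_le le_rfl
  exact (measurable_pi_apply (⟨z, hz⟩ : W)).comp h1

lemma measurable_restrict_F {W V : Set S} (h : W ⊆ V) :
    @Measurable (S → E) (W → E) (F E V) MeasurableSpace.pi (fun σ y => σ ↑y) := by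
  have h2 : Measurable (fun p : V → E => fun y : W => p ⟨y.1, h y.2⟩) :=
    measurable_pi_lambda _ (fun y => measurable_pi_apply _)
  have h1 : Measurable[F E V] (fun σ : S → E => fun y : V => σ y) :=
    Measurable.of_comap_le le_rfl
  exact h2.comp h1

lemma F_mono {W V : Set S} (h : W ⊆ V) : F E W ≤ F E V :=
  measurable_iff_comap_le.mp (measurable_restrict_F h)

/-- To prove measurability into `(S → E, F E W)` it suffices to check coordinates in `W`. -/
lemma measurable_into_F {α : Type*} {mα : MeasurableSpace α} {W : Set S}
    {g : α → S → E} (h : ∀ z ∈ W, Measurable[mα] (fun a => g a z)) :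
    @Measurable α (S → E) mα (F E W) g := by
  have h1 : Measurable[mα] (fun a => fun y : W => g a y) := by
    rw [measurable_pi_iff]; exact fun y => h y y.2
  rw [F, measurable_iff_comap_le, MeasurableSpace.comap_comp]
  exact measurable_iff_comap_le.mp h1

lemma mem_of_agree {W : Set S} {A : Set (S → E)} (hA : MeasurableSet[F E W] A)
    {σ τ : S → E} (hag : ∀ z ∈ W, σ z = τ z) : σ ∈ A ↔ τ ∈ A := by
  obtain ⟨B, -, rfl⟩ := hA
  have : (fun y : W => σ y) = fun y : W => τ y := by
    funext y; exact hag y y.2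
  simp only [Set.mem_preimage, this]

lemma eq_of_agree {β : Type*} [MeasurableSpace β] [MeasurableSingletonClass β]
    {W : Set S} {g : (S → E) → β} (hg : Measurable[F E W] g)
    {σ τ : S → E} (hag : ∀ z ∈ W, σ z = τ z) : g σ = g τ := by
  have hA : MeasurableSet[F E W] (g ⁻¹' {g σ}) := hg (measurableSet_singleton _)
  have := (mem_of_agree hA hag).mp rfl
  simpa using this.symm

end AuxMeas
section AuxGeom

variable {S : Type*} [PartialOrder S]

lemma timeBox_elim {Λ : Finset S} (h : IsTimeBox Λ) {z y y' : S} (hz : z ∉ Λ)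
    (hy : y ∈ Λ) (hy' : y' ∈ Λ) (h1 : z < y) (h2 : y' < z) : False := by
  have : z ∈ past (Λ : Set S) ∩ future (Λ : Set S) :=
    ⟨⟨by simpa using hz, y, by simpa using hy, h1⟩,
     ⟨by simpa using hz, y', by simpa using hy', h2⟩⟩
  rw [h] at this; exact this

lemma floor_eq {Λ : Finset S} (hΛ : IsTimeBox Λ) : floorB Λ = (Λ : Set S) ∪ ringB Λ := by
  ext z
  simp only [floorB, ringB, past, future, outerT, Set.mem_compl_iff, Set.mem_union,
    Set.mem_setOf_eq]
  constructor
  · intro hz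
    by_cases hzΛ : z ∈ (Λ : Set S)
    · exact Or.inl hzΛ
    · push_neg at hz
      rcases Classical.em (∃ y ∈ (Λ : Set S), z < y) with h | h
      · exact Or.inr (Or.inl ⟨hzΛ, h⟩)
      · push_neg at h
        refine Or.inr (Or.inr fun y hy => ⟨fun hle => ?_, fun hle => ?_⟩)
        · rcases lt_or_eq_of_le hle with h' | h'
          · exact h y hy h'
          · exact hzΛ (h' ▸ hy)
        · rcases lt_or_eq_of_le hle with h' | h'
          · exact hz hzΛ y hy h'
          · exact hzΛ (h' ▸ hy)
  · rintro (hz | ⟨hz, y, hy, hlt⟩ | hz) ⟨hzn, y2, hy2, hlt2⟩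
    · exact hzn hz
    · exact timeBox_elim hΛ (by simpa using hz) (by simpa using hy) (by simpa using hy2) hlt hlt2
    · exact (hz y2 hy2).2 (le_of_lt hlt2)

lemma coe_subset_floor {Λ : Finset S} (hΛ : IsTimeBox Λ) : (Λ : Set S) ⊆ floorB Λ := by
  rw [floor_eq hΛ]; exact Set.subset_union_left

lemma past_subset_ring (Λ : Finset S) : past (Λ : Set S) ⊆ ringB Λ := Set.subset_union_left

lemma ring_subset_floor {Λ : Finset S} (hΛ : IsTimeBox Λ) : ringB Λ ⊆ floorB Λ := by
  rw [floor_eq hΛ]; exact Set.subset_union_right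

lemma mem_ring_not_mem {Λ : Finset S} {z : S} (h : z ∈ ringB Λ) : z ∉ (Λ : Set S) := by
  rcases h with h | h
  · exact h.1
  · intro hz; exact (h z hz).1 le_rfl

lemma ring_empty : ringB (∅ : Finset S) = (Set.univ : Set S) := by
  ext z; simp [ringB, outerT]

lemma singleton_timeBox (x : S) : IsTimeBox ({x} : Finset S) := by
  ext z
  simp only [past, future, Set.mem_inter_iff, Set.mem_setOf_eq, Finset.coe_singleton,
    Set.mem_singleton_iff, Set.mem_empty_iff_false, iff_false]
  rintro ⟨⟨-, y, rfl, h1⟩, ⟨-, y', rfl, h2⟩⟩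
  exact lt_asymm h1 h2

section Erase
variable [DecidableEq S] {Λ : Finset S} {x : S} (hΛ : IsTimeBox Λ) (hx : x ∈ Λ)
  (hmax : ∀ y ∈ Λ, ¬ x < y)

include hΛ hx hmax

lemma timeBox_erase : IsTimeBox (Λ.erase x) := by
  ext z
  simp only [Set.mem_inter_iff, Set.mem_empty_iff_false, iff_false]
  rintro ⟨⟨hz, y, hy, h1⟩, ⟨-, y', hy', h2⟩⟩
  have hy'' := Finset.mem_of_mem_erase (by rw [Finset.mem_erase]; exact and_comm.mp (by simpa using hy) : y ∈ Λ.erase x)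
  have hy''' := Finset.mem_of_mem_erase (by rw [Finset.mem_erase]; exact and_comm.mp (by simpa using hy') : y' ∈ Λ.erase x)
  by_cases hzx : z = x
  · exact hmax y hy'' (hzx ▸ h1)
  · have hzΛ : z ∉ Λ := fun h => hz (by simpa [Finset.mem_erase, hzx] using h)
    exact timeBox_elim hΛ hzΛ hy'' hy''' h1 h2

lemma past_erase_subset : past ((Λ.erase x : Finset S) : Set S) ⊆ past (Λ : Set S) := by
  rintro z ⟨hz, y, hy, hlt⟩
  have hyΛ : y ∈ Λ := Finset.mem_of_mem_erase (by rw [Finset.mem_erase]; exact and_comm.mp (by simpa using hy) : y ∈ Λ.erase x)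
  by_cases hzx : z = x
  · exact absurd (hzx ▸ hlt) (hmax y hyΛ)
  · have : z ∉ Λ := fun h => hz (by simpa [Finset.mem_erase, hzx] using h)
    exact ⟨by simpa using this, y, by simpa using hyΛ, hlt⟩

lemma floor_diff_subset_floor_erase :
    floorB Λ \ ((({x} : Finset S)) : Set S) ⊆ floorB (Λ.erase x) := by
  rintro z ⟨hz, hzx'⟩
  have hzx : z ∉ ({x} : Set S) := by simpa using hzx'
  simp only [floorB, Set.mem_compl_iff] at hz ⊢
  rintro ⟨hzn, y, hy, hlt⟩
  have hyΛ : y ∈ Λ := Finset.mem_of_mem_erase (by rw [Finset.mem_erase]; exact and_comm.mp (by simpa using hy) : y ∈ Λ.erase x)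
  have hzΛ : z ∉ Λ := by
    intro h
    exact hzn (by simpa [Finset.mem_erase, Set.mem_singleton_iff.not.mp hzx] using h)
  exact hz ⟨by simpa using hzΛ, y, by simpa using hyΛ, hlt⟩

omit [DecidableEq S] hΛ in
lemma floor_subset_floor_singleton : floorB Λ ⊆ floorB ({x} : Finset S) := by
  intro z hz
  simp only [floorB, Set.mem_compl_iff] at hz ⊢
  rintro ⟨hzn, y, hy, hlt⟩
  simp only [Finset.coe_singleton, Set.mem_singleton_iff] at hy hzn
  rw [hy] at hlt
  have hzΛ : z ∉ Λ := fun h => hmax z h hlt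
  exact hz ⟨by simpa using hzΛ, x, by simpa using hx, hlt⟩

lemma pastx_subset_floor_erase :
    past (({x} : Finset S) : Set S) ⊆ floorB (Λ.erase x) := by
  rintro z ⟨-, y, hy, hlt⟩
  simp only [Finset.coe_singleton, Set.mem_singleton_iff] at hy
  rw [hy] at hlt
  simp only [floorB, Set.mem_compl_iff]
  rintro ⟨hzn, y', hy', hlt'⟩
  have hy'Λ : y' ∈ Λ := Finset.mem_of_mem_erase (by rw [Finset.mem_erase]; exact and_comm.mp (by simpa using hy') : y' ∈ Λ.erase x)
  have hzΛ : z ∉ Λ := by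
    intro h
    have hne : z ≠ x := fun h' => absurd (h' ▸ hlt) (lt_irrefl x)
    exact hzn (by simpa [Finset.mem_erase, hne] using h)
  exact timeBox_elim hΛ hzΛ hx hy'Λ hlt hlt'

omit [DecidableEq S] hmax in
lemma pastx_subset_floor : past (({x} : Finset S) : Set S) ⊆ floorB Λ := by
  rintro z ⟨-, y, hy, hlt⟩
  simp only [Finset.coe_singleton, Set.mem_singleton_iff] at hy
  rw [hy] at hlt
  simp only [floorB, Set.mem_compl_iff]
  rintro ⟨hzn, y', hy', hlt'⟩
  exact timeBox_elim hΛ (by simpa using hzn) hx (by simpa using hy') hlt hlt'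

lemma V_subset_ring :
    past ((Λ.erase x : Finset S) : Set S) ∪
      ((past (({x} : Finset S) : Set S) ∪ (floorB Λ \ ((({x} : Finset S)) : Set S))) \
        ((Λ.erase x : Finset S) : Set S))
      ⊆ ringB Λ := by
  rintro z (hz | ⟨(hz | ⟨hz, hzx'⟩), hzn⟩)
  · exact past_subset_ring Λ (past_erase_subset hΛ hx hmax hz)
  · obtain ⟨-, y, hy, hlt⟩ := hz
    simp only [Finset.coe_singleton, Set.mem_singleton_iff] at hy
    rw [hy] at hlt
    have hzx : z ≠ x := fun h => absurd (h ▸ hlt) (lt_irrefl x)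
    have hzΛ : z ∉ Λ := by
      intro h
      exact hzn (by simpa [Finset.mem_erase, hzx] using h)
    exact past_subset_ring Λ ⟨by simpa using hzΛ, x, by simpa using hx, hlt⟩
  · have hzx : z ∉ ({x} : Set S) := by simpa using hzx'
    have hzΛ : z ∉ Λ := by
      intro h
      exact hzn (by simpa [Finset.mem_erase, Set.mem_singleton_iff.not.mp hzx] using h)
    rw [floor_eq hΛ] at hz
    rcases hz with hz | hz
    · exact absurd hz (by simpa using hzΛ)
    · exact hz

end Erase

lemma past_subset_floor_of_subset {Λ Δ : Finset S} (hΔ : IsTimeBox Δ) (hsub : Λ ⊆ Δ) :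
    past (Λ : Set S) ⊆ floorB Δ := by
  rintro z ⟨hz, y, hy, hlt⟩
  simp only [floorB, Set.mem_compl_iff]
  rintro ⟨hzn, y', hy', hlt'⟩
  exact timeBox_elim hΔ (by simpa using hzn) (hsub (by simpa using hy)) (by simpa using hy')
    hlt hlt'

end AuxGeom
section AuxKernel

variable {S : Type*} [PartialOrder S] [Countable S] {E : Type*} [MeasurableSpace E]
  [Countable E] [MeasurableSingletonClass E]

/-- The cylinder event prescribing the configuration on `Γ`. -/
def cylC (Γ : Finset S) (c : {z // z ∈ Γ} → E) : Set (S → E) := {ξ | ∀ z : {z // z ∈ Γ}, ξ z = c z}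

open Classical in
/-- Patching a configuration with a prescribed configuration on `Γ`. -/
noncomputable def patchC (Γ : Finset S) (σ : S → E) (c : {z // z ∈ Γ} → E) : S → E :=
  fun z => if h : z ∈ Γ then c ⟨z, h⟩ else σ z

lemma cylC_meas (Γ : Finset S) (c : {z // z ∈ Γ} → E) :
    MeasurableSet[F E (Γ : Set S)] (cylC Γ c) := by
  have : cylC Γ c = ⋂ z : {z // z ∈ Γ}, (fun ξ : S → E => ξ z) ⁻¹' {c z} := by
    ext ξ; simp [cylC]
  rw [this]
  exact MeasurableSet.iInter fun z =>
    measurable_eval (by simpa using z.2) (measurableSet_singleton _)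

lemma patchC_mem_cyl (Γ : Finset S) (σ : S → E) (c : {z // z ∈ Γ} → E) :
    patchC Γ σ c ∈ cylC Γ c := fun z => by simp [patchC, z.2]

lemma patchC_not_mem {Γ : Finset S} {z : S} (hz : z ∉ Γ) (σ : S → E) (c) :
    patchC Γ σ c z = σ z := by simp [patchC, hz]

lemma iUnion_cylC (Γ : Finset S) : (⋃ c : {z // z ∈ Γ} → E, cylC Γ c) = Set.univ := by
  ext ξ
  simp only [Set.mem_iUnion, Set.mem_univ, iff_true]
  exact ⟨fun z => ξ z, fun z => rfl⟩

lemma cylC_disjoint (Γ : Finset S) :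
    Pairwise (Function.onFun Disjoint (cylC (E := E) Γ)) := by
  intro c c' hcc'
  rw [Function.onFun, Set.disjoint_left]
  intro ξ h1 h2
  exact hcc' (funext fun z => (h1 z).symm.trans (h2 z))

variable {Γ : Finset S} {κ : (S → E) → BoxMeasure E Γ}

lemma ae_agree_ring (hpk : IsProperKernel E Γ κ) (hΓ : IsTimeBox Γ) (ω : S → E) :
    ∀ᵐ ξ ∂(κ ω), ∀ z ∈ ringB Γ, ξ z = ω z := by
  haveI := hpk.prob ω
  rw [ae_ball_iff (Set.to_countable (ringB Γ))]
  intro z hz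
  set B : Set (S → E) := (fun ξ : S → E => ξ z) ⁻¹' {ω z} with hB
  have hBr : MeasurableSet[F E (ringB Γ)] B :=
    measurable_eval hz (measurableSet_singleton _)
  have h1 : κ ω B = 1 := by
    rw [hpk.proper B hBr ω, Set.indicator_of_mem (by simp [hB])]
  have hBf : MeasurableSet[F E (floorB Γ)] B := F_mono (ring_subset_floor hΓ) _ hBr
  have h0 : κ ω Bᶜ = 0 := by
    rw [measure_compl hBf (measure_ne_top _ _), h1, measure_univ, tsub_self]
  have : {ξ : S → E | ¬ ξ z = ω z} = Bᶜ := by ext ξ; simp [hB]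
  exact (MeasureTheory.ae_iff).mpr (by rw [this]; exact h0)

lemma integrable_of_bdd (hpk : IsProperKernel E Γ κ) (ω : S → E) {g : (S → E) → ℝ}
    (hg : Measurable[F E (floorB Γ)] g) {C : ℝ} (hC : ∀ a, |g a| ≤ C) :
    Integrable g (κ ω) := by
  haveI := hpk.prob ω
  exact ⟨hg.stronglyMeasurable.aestronglyMeasurable,
    HasFiniteIntegral.of_bounded (C := C)
      (Eventually.of_forall fun a => by simpa [Real.norm_eq_abs] using hC a)⟩

/-- Value of the kernel measure on a set measurable w.r.t. coordinates in `W`. -/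
lemma kernel_apply_eq (hpk : IsProperKernel E Γ κ) (hΓ : IsTimeBox Γ) {W : Set S}
    (hW : W ⊆ floorB Γ) {A : Set (S → E)} (hA : MeasurableSet[F E W] A) (σ : S → E) :
    κ σ A = ∑' c : {z // z ∈ Γ} → E,
      Set.indicator {σ' : S → E | patchC Γ σ' c ∈ A} (fun σ' => κ σ' (cylC Γ c)) σ := by
  haveI := hpk.prob σ
  have hAf : MeasurableSet[F E (floorB Γ)] A := F_mono hW _ hA
  have hcylf : ∀ c, MeasurableSet[F E (floorB Γ)] (cylC Γ c) := fun c =>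
    F_mono (coe_subset_floor hΓ) _ (cylC_meas Γ c)
  have hN := ae_agree_ring hpk hΓ σ
  have key : ∀ c : {z // z ∈ Γ} → E, κ σ (A ∩ cylC Γ c) =
      Set.indicator {σ' : S → E | patchC Γ σ' c ∈ A} (fun σ' => κ σ' (cylC Γ c)) σ := by
    intro c
    have hagree : ∀ ξ ∈ cylC Γ c, (∀ z ∈ ringB Γ, ξ z = σ z) →
        (ξ ∈ A ↔ patchC Γ σ c ∈ A) := by
      intro ξ hξ hring
      refine mem_of_agree hA fun z hzW => ?_
      by_cases hzΓ : z ∈ Γ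
      · rw [hξ ⟨z, hzΓ⟩]; simp [patchC, hzΓ]
      · have hzring : z ∈ ringB Γ := by
          have := hW hzW
          rw [floor_eq hΓ] at this
          rcases this with h | h
          · exact absurd h hzΓ
          · exact h
        rw [hring z hzring, patchC_not_mem hzΓ]
    by_cases hP : patchC Γ σ c ∈ A
    · rw [Set.indicator_of_mem (by simpa using hP)]
      have : cylC Γ c ≤ᵐ[κ σ] (A ∩ cylC Γ c : Set (S → E)) := by
        filter_upwards [hN] with ξ hξ hcyl
        exact ⟨(hagree ξ hcyl hξ).mpr hP, hcyl⟩
      have h2 : (A ∩ cylC Γ c : Set (S → E)) ≤ᵐ[κ σ] cylC Γ c :=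
        Eventually.of_forall fun ξ hξ => hξ.2
      exact measure_congr (this.antisymm h2) ▸ rfl
    · rw [Set.indicator_of_notMem (by simpa using hP)]
      refine measure_mono_null_ae ?_ (by simp : κ σ (∅ : Set (S → E)) = 0)
      filter_upwards [hN] with ξ hξ hmem
      exact hP ((hagree ξ hmem.2 hξ).mp hmem.1)
  calc κ σ A = κ σ (⋃ c, A ∩ cylC Γ c) := by rw [← Set.inter_iUnion, iUnion_cylC, Set.inter_univ]
  _ = ∑' c, κ σ (A ∩ cylC Γ c) := by
      refine measure_iUnion ?_ (fun c => hAf.inter (hcylf c))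
      intro c c' hcc'
      exact Set.disjoint_left.mpr fun ξ h1 h2 =>
        Set.disjoint_left.mp (cylC_disjoint Γ hcc') h1.2 h2.2
  _ = _ := tsum_congr key

/-- Refined measurability of the kernel measure of a `W`-measurable set. -/
lemma measurable_kernel_apply (hpk : IsProperKernel E Γ κ) (hΓ : IsTimeBox Γ) {W : Set S}
    (hW : W ⊆ floorB Γ) {A : Set (S → E)} (hA : MeasurableSet[F E W] A) :
    Measurable[F E (past (Γ : Set S) ∪ (W \ (Γ : Set S)))] (fun σ => κ σ A) := by
  have hform := kernel_apply_eq hpk hΓ hW hA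
  simp only [hform]
  refine Measurable.ennreal_tsum fun c => ?_
  refine Measurable.indicator ?_ ?_
  · -- measurability of σ ↦ κ σ (cylC Γ c), from measPast
    exact (hpk.measPast (cylC Γ c) (cylC_meas Γ c)).mono
      (F_mono Set.subset_union_left) le_rfl
  · -- measurability of {σ' | patchC Γ σ' c ∈ A}
    have hpm : @Measurable (S → E) (S → E) (F E (past (Γ : Set S) ∪ (W \ (Γ : Set S)))) (F E W)
        (fun σ => patchC Γ σ c) := by
      refine measurable_into_F fun z hzW => ?_
      by_cases hzΓ : z ∈ Γ
      · simpa [patchC, hzΓ] using measurable_const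
      · simpa [patchC, hzΓ] using measurable_eval (Set.mem_union_right _ (Set.mem_diff z |>.mpr ⟨hzW, by simpa using hzΓ⟩))
    exact hpm hA

end AuxKernel
section AuxKernelInt

open ProbabilityTheory

variable {S : Type*} [PartialOrder S] [Countable S] {E : Type*} [MeasurableSpace E]
  [Countable E] [MeasurableSingletonClass E]
  {Γ : Finset S} {κ : (S → E) → BoxMeasure E Γ}

/-- Measurability of the kernel integral of a `W`-measurable function. -/
lemma measurable_kernel_integral (hpk : IsProperKernel E Γ κ) (hΓ : IsTimeBox Γ) {W : Set S}
    (hW : W ⊆ floorB Γ) {g : (S → E) → ℝ} (hg : Measurable[F E W] g) :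
    Measurable[F E (past (Γ : Set S) ∪ (W \ (Γ : Set S)))] (fun σ => ∫ ξ, g ξ ∂κ σ) := by
  have hle : F E W ≤ F E (floorB Γ) := F_mono hW
  set mV := F E (past (Γ : Set S) ∪ (W \ (Γ : Set S))) with hmV
  have hker : @Measurable (S → E) (@Measure (S → E) (F E W)) mV
      (@Measure.instMeasurableSpace (S → E) (F E W)) (fun σ => (κ σ).trim hle) := by
    refine @Measure.measurable_of_measurable_coe (S → E) (S → E) (F E W) mV _ ?_
    intro A hA
    have : (fun σ => (κ σ).trim hle A) = fun σ => κ σ A := by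
      funext σ; exact trim_measurableSet_eq hle hA
    rw [this]
    exact measurable_kernel_apply hpk hΓ hW hA
  let κ' : @Kernel (S → E) (S → E) mV (F E W) := @Kernel.mk _ _ mV (F E W) _ hker
  haveI : @IsMarkovKernel _ _ mV (F E W) κ' := by
    constructor
    intro σ
    constructor
    show ((κ σ).trim hle) Set.univ = 1
    haveI := hpk.prob σ
    rw [trim_measurableSet_eq hle MeasurableSet.univ, measure_univ]
  have hgsm : StronglyMeasurable[F E W] g := hg.stronglyMeasurable
  have hsm : StronglyMeasurable[@Prod.instMeasurableSpace _ _ mV (F E W)]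
      (fun p : (S → E) × (S → E) => g p.2) :=
    hgsm.comp_measurable (@measurable_snd _ _ mV (F E W))
  have h2 := hsm.integral_kernel_prod_right' (κ := κ')
  have heq : (fun σ => ∫ ξ, (fun p : (S → E) × (S → E) => g p.2) (σ, ξ) ∂κ' σ)
      = fun σ => ∫ ξ, g ξ ∂κ σ := by
    funext σ
    show ∫ ξ, g ξ ∂((κ σ).trim hle) = ∫ ξ, g ξ ∂κ σ
    exact (integral_trim hle hgsm).symm
  rw [← heq]
  exact h2.measurable

end AuxKernelInt
section AuxDom

variable {E : Type*} [MeasurableSpace E] [Countable E] [MeasurableSingletonClass E]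
  [LinearOrder E]

lemma measE (s : Set E) : MeasurableSet s := s.to_countable.measurableSet

lemma upset_le {ν₁ ν₂ : Measure E} (hdom : ∀ a : E, ν₁ (Set.Ici a) ≤ ν₂ (Set.Ici a))
    {U : Set E} (hU : ∀ ⦃a b : E⦄, a ∈ U → a ≤ b → b ∈ U) : ν₁ U ≤ ν₂ U := by
  rcases U.eq_empty_or_nonempty with rfl | hne
  · simp
  obtain ⟨g, hg⟩ := (Set.to_countable U).exists_eq_range hne
  -- partial minima
  let m : ℕ → E := fun n => Nat.rec (g 0) (fun k mk => min (g (k + 1)) mk) n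
  have hmU : ∀ n, m n ∈ U := by
    intro n
    induction n with
    | zero => exact hg ▸ Set.mem_range_self 0
    | succ k ih =>
      rcases min_cases (g (k + 1)) (m k) with ⟨h1, -⟩ | ⟨h1, -⟩
      · show min (g (k+1)) (m k) ∈ U; rw [h1]; exact hg ▸ Set.mem_range_self (k+1)
      · show min (g (k+1)) (m k) ∈ U; rw [h1]; exact ih
  have hmono : Monotone fun n => Set.Ici (m n) := by
    intro i j hij
    refine Set.Ici_subset_Ici.mpr ?_
    induction hij with
    | refl => exact le_rfl
    | step _ ih => exact le_trans (min_le_right _ _) ih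
  have hUeq : U = ⋃ n, Set.Ici (m n) := by
    ext a
    simp only [Set.mem_iUnion, Set.mem_Ici]
    constructor
    · intro ha
      rw [hg] at ha
      obtain ⟨n, rfl⟩ := ha
      refine ⟨n, ?_⟩
      cases n with
      | zero => exact le_rfl
      | succ k => exact min_le_left _ _
    · rintro ⟨n, hn⟩
      exact hU (hmU n) hn
  rw [hUeq, (hmono.directed_le).measure_iUnion, (hmono.directed_le).measure_iUnion]
  exact iSup_mono fun n => hdom (m n)

lemma dom_integral_le {ν₁ ν₂ : Measure E} [IsProbabilityMeasure ν₁] [IsProbabilityMeasure ν₂]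
    (hdom : ∀ a : E, ν₁ (Set.Ici a) ≤ ν₂ (Set.Ici a)) {φ : E → ℝ} (hφ : Monotone φ)
    {C : ℝ} (hC : ∀ a, |φ a| ≤ C) : ∫ a, φ a ∂ν₁ ≤ ∫ a, φ a ∂ν₂ := by
  set ψ : E → ℝ := fun a => φ a + C with hψ
  have hψ_nn : ∀ a, 0 ≤ ψ a := fun a => by
    have := (abs_le.mp (hC a)).1; simp only [hψ]; linarith
  have hψ_bd : ∀ a, ψ a ≤ 2 * C := fun a => by
    have := (abs_le.mp (hC a)).2; simp only [hψ]; linarith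
  have hint : ∀ ν : Measure E, IsProbabilityMeasure ν → Integrable φ ν := by
    intro ν hν
    exact ⟨(measurable_of_countable φ).aestronglyMeasurable,
      HasFiniteIntegral.of_bounded (C := C)
        (Eventually.of_forall fun a => by simpa [Real.norm_eq_abs] using hC a)⟩
  have key : ∀ ν : Measure E, IsProbabilityMeasure ν →
      ∫ a, ψ a ∂ν = (∫⁻ t in Set.Ioi (0:ℝ), ν {a | t < ψ a}).toReal := by
    intro ν hν
    rw [integral_eq_lintegral_of_nonneg_ae (Eventually.of_forall hψ_nn)
      (measurable_of_countable ψ).aestronglyMeasurable,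
      lintegral_eq_lintegral_meas_lt ν (Eventually.of_forall hψ_nn)
      (measurable_of_countable ψ).aemeasurable]
  have hup : ∀ t : ℝ, ν₁ {a | t < ψ a} ≤ ν₂ {a | t < ψ a} := by
    intro t
    refine upset_le hdom ?_
    intro a b ha hab
    have ha' : t < ψ a := ha
    have hb : ψ a ≤ ψ b := by
      have := hφ hab; simp only [hψ]; linarith
    exact lt_of_lt_of_le ha' hb
  have h1 : ∫ a, ψ a ∂ν₁ ≤ ∫ a, ψ a ∂ν₂ := by
    rw [key ν₁ inferInstance, key ν₂ inferInstance]
    refine ENNReal.toReal_mono ?_ ?_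
    · refine ne_of_lt (lt_of_le_of_lt ?_ (?_ : volume (Set.Ioc (0:ℝ) (2*C)) < ⊤))
      · calc ∫⁻ t in Set.Ioi (0:ℝ), ν₂ {a | t < ψ a}
            ≤ ∫⁻ t in Set.Ioi (0:ℝ),
              (Set.Ioc (0:ℝ) (2*C)).indicator (fun _ => (1:ℝ≥0∞)) t := by
              refine lintegral_mono_ae ?_
              filter_upwards [self_mem_ae_restrict measurableSet_Ioi] with t ht
              by_cases htC : t ≤ 2*C
              · have hmem : t ∈ Set.Ioc (0:ℝ) (2*C) := Set.mem_Ioc.mpr ⟨ht, htC⟩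
                rw [Set.indicator_of_mem hmem (fun _ => (1:ℝ≥0∞))]
                exact prob_le_one
              · have hnm : t ∉ Set.Ioc (0:ℝ) (2*C) := fun hmem => htC (Set.mem_Ioc.mp hmem).2
                rw [Set.indicator_of_notMem hnm (fun _ => (1:ℝ≥0∞))]
                have : {a | t < ψ a} = (∅ : Set E) := by
                  ext a
                  simp only [Set.mem_setOf_eq, Set.mem_empty_iff_false, iff_false, not_lt]
                  exact le_trans (hψ_bd a) (le_of_not_ge htC)
                rw [this, measure_empty]
          _ = volume.restrict (Set.Ioi (0:ℝ)) (Set.Ioc (0:ℝ) (2*C)) := by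
              rw [lintegral_indicator measurableSet_Ioc]
              simp [Measure.restrict_restrict measurableSet_Ioc]
          _ ≤ volume (Set.Ioc (0:ℝ) (2*C)) := Measure.restrict_le_self _
      · rw [Real.volume_Ioc]
        exact ENNReal.ofReal_lt_top
    · exact lintegral_mono fun t => hup t
  have e1 : ∫ a, ψ a ∂ν₁ = ∫ a, φ a ∂ν₁ + C := by
    rw [integral_add (hint ν₁ inferInstance) (integrable_const C), integral_const]
    simp
  have e2 : ∫ a, ψ a ∂ν₂ = ∫ a, φ a ∂ν₂ + C := by
    rw [integral_add (hint ν₂ inferInstance) (integrable_const C), integral_const]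
    simp
  rw [e1, e2] at h1
  linarith

end AuxDom
section AuxSingle

variable {S : Type*} [PartialOrder S] [Countable S] {E : Type*} [MeasurableSpace E]
  [Countable E] [MeasurableSingletonClass E] [LinearOrder E]

open Classical in
/-- Update a configuration at a single site. -/
noncomputable def updE (x : S) (σ : S → E) (a : E) : S → E := fun z => if z = x then a else σ z

lemma updE_same (x : S) (σ : S → E) (a : E) : updE x σ a x = a := by simp [updE]

lemma updE_other {x z : S} (h : z ≠ x) (σ : S → E) (a : E) : updE x σ a z = σ z := by
  simp [updE, h]

variable {γ : ∀ Λ : Finset S, (S → E) → BoxMeasure E Λ}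

/-- The single-site marginal of a box measure. -/
noncomputable def margM (x : S) (μ : BoxMeasure E ({x} : Finset S)) : Measure E :=
  @Measure.map (S → E) E (F E (floorB ({x} : Finset S))) _ (fun ξ => ξ x) μ

lemma single_site_rep {x : S} (hpk : IsProperKernel E {x} (γ {x})) {f : (S → E) → ℝ}
    (hf : Measurable[F E (floorB ({x} : Finset S))] f) (σ : S → E) :
    ∫ ξ, f ξ ∂γ {x} σ = ∫ a, f (updE x σ a) ∂(margM x (γ {x} σ)) := by
  letI : MeasurableSpace (S → E) := F E (floorB ({x} : Finset S))
  haveI := hpk.prob σ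
  have hxmem : x ∈ floorB ({x} : Finset S) :=
    coe_subset_floor (singleton_timeBox x) (by simp)
  have hev : Measurable[F E (floorB ({x} : Finset S))] (fun ξ : S → E => ξ x) :=
    measurable_eval hxmem
  have step1 : ∫ ξ, f ξ ∂γ {x} σ = ∫ ξ, f (updE x σ (ξ x)) ∂γ {x} σ := by
    refine integral_congr_ae ?_
    filter_upwards [ae_agree_ring hpk (singleton_timeBox x) σ] with ξ hξ
    refine eq_of_agree hf fun z hz => ?_
    rw [floor_eq (singleton_timeBox x)] at hz
    rcases hz with hz | hz
    · have : z = x := by simpa using hz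
      rw [this, updE_same]
    · have hzx : z ≠ x := by
        intro h
        exact mem_ring_not_mem hz (by simp [h])
      rw [updE_other hzx, hξ z hz]
  rw [step1, margM, integral_map hev.aemeasurable
    (measurable_of_countable (fun a : E => f (updE x σ a))).aestronglyMeasurable]

lemma single_site_mono {x : S} (hpk : IsProperKernel E {x} (γ {x}))
    (hyp : ∀ (a : E) (ω η : S → E), ω ≤ η →
      γ ({x} : Finset S) ω {σ | a ≤ σ x} ≤ γ ({x} : Finset S) η {σ | a ≤ σ x})
    {f : (S → E) → ℝ} (hf : Measurable[F E (floorB ({x} : Finset S))] f)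
    {C : ℝ} (hC : ∀ ξ, |f ξ| ≤ C) (hm : Monotone f) :
    Monotone fun σ => ∫ ξ, f ξ ∂γ {x} σ := by
  intro σ τ hστ
  letI : MeasurableSpace (S → E) := F E (floorB ({x} : Finset S))
  haveI := hpk.prob σ
  haveI := hpk.prob τ
  have hxmem : x ∈ floorB ({x} : Finset S) :=
    coe_subset_floor (singleton_timeBox x) (by simp)
  have hev : Measurable[F E (floorB ({x} : Finset S))] (fun ξ : S → E => ξ x) :=
    measurable_eval hxmem
  set ν₁ := margM x (γ {x} σ) with hν₁
  set ν₂ := margM x (γ {x} τ) with hν₂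
  haveI : IsProbabilityMeasure ν₁ := by
    rw [hν₁, margM]; exact Measure.isProbabilityMeasure_map hev.aemeasurable
  haveI : IsProbabilityMeasure ν₂ := by
    rw [hν₂, margM]; exact Measure.isProbabilityMeasure_map hev.aemeasurable
  have hdom : ∀ a : E, ν₁ (Set.Ici a) ≤ ν₂ (Set.Ici a) := by
    intro a
    rw [hν₁, hν₂, margM, margM, Measure.map_apply hev (measE _),
      Measure.map_apply hev (measE _)]
    exact hyp a σ τ hστ
  have hupd_mono : ∀ ρ : S → E, Monotone fun a => f (updE x ρ a) := by
    intro ρ a b hab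
    refine hm fun z => ?_
    by_cases hz : z = x
    · subst hz; rw [updE_same, updE_same]; exact hab
    · rw [updE_other hz, updE_other hz]
  have hupd_bd : ∀ (ρ : S → E) (a : E), |f (updE x ρ a)| ≤ C := fun ρ a => hC _
  calc ∫ ξ, f ξ ∂γ {x} σ = ∫ a, f (updE x σ a) ∂ν₁ := single_site_rep hpk hf σ
  _ ≤ ∫ a, f (updE x σ a) ∂ν₂ :=
      dom_integral_le hdom (hupd_mono σ) (hupd_bd σ)
  _ ≤ ∫ a, f (updE x τ a) ∂ν₂ := by
      refine integral_mono ?_ ?_ ?_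
      · exact ⟨(measurable_of_countable _).aestronglyMeasurable,
          HasFiniteIntegral.of_bounded (C := C)
            (Eventually.of_forall fun a => by simpa [Real.norm_eq_abs] using hupd_bd σ a)⟩
      · exact ⟨(measurable_of_countable _).aestronglyMeasurable,
          HasFiniteIntegral.of_bounded (C := C)
            (Eventually.of_forall fun a => by simpa [Real.norm_eq_abs] using hupd_bd τ a)⟩
      · intro a
        refine hm fun z => ?_
        by_cases hz : z = x
        · subst hz; rw [updE_same, updE_same]
        · rw [updE_other hz, updE_other hz]; exact hστ z
  _ = ∫ ξ, f ξ ∂γ {x} τ := (single_site_rep hpk hf τ).symm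

end AuxSingle
section KeyLemma

variable {S : Type*} [PartialOrder S] [Countable S] {E : Type*} [MeasurableSpace E]
  [Countable E] [MeasurableSingletonClass E] [LinearOrder E]
  {γ : ∀ Λ : Finset S, (S → E) → BoxMeasure E Λ}

lemma empty_timeBox : IsTimeBox (∅ : Finset S) := by
  ext z; simp [past, future]

lemma integral_empty_box (hpk : IsProperKernel E ∅ (γ ∅)) (f : (S → E) → ℝ) (ω : S → E) :
    ∫ ξ, f ξ ∂γ ∅ ω = f ω := by
  haveI := hpk.prob ω
  have hae : ∀ᵐ ξ ∂γ ∅ ω, f ξ = f ω := by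
    filter_upwards [ae_agree_ring hpk empty_timeBox ω] with ξ hξ
    have : ξ = ω := funext fun z => hξ z (by rw [ring_empty]; trivial)
    rw [this]
  rw [integral_congr_ae hae, integral_const]; simp

lemma abs_int_le {Ω : Type*} {mΩ : MeasurableSpace Ω} {μ : Measure Ω} [IsProbabilityMeasure μ]
    {f : Ω → ℝ} {C : ℝ} (hC : ∀ a, |f a| ≤ C) : |∫ a, f a ∂μ| ≤ C := by
  have := norm_integral_le_of_norm_le_const (μ := μ) (f := f) (C := C)
    (Eventually.of_forall fun a => by simpa [Real.norm_eq_abs] using hC a)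
  simpa [Real.norm_eq_abs, measure_univ] using this

lemma key_mono (hγ : IsPOS E γ) (u : E) (hu : ∀ a : E, a ≤ u)
    (hyp : ∀ (y : S) (a : E) (ω η : S → E), ω ≤ η →
      γ ({y} : Finset S) ω {σ | a ≤ σ y} ≤ γ ({y} : Finset S) η {σ | a ≤ σ y}) :
    ∀ (n : ℕ) (Λ : Finset S), Λ.card ≤ n → IsTimeBox Λ →
      ∀ f : (S → E) → ℝ, Measurable[F E (floorB Λ)] f → Bounded f → Monotone f →
      ∀ ω : S → E, ∫ ξ, f ξ ∂γ Λ ω ≤ ∫ ξ, f ξ ∂γ Λ (fun _ => u) := by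
  classical
  intro n
  induction n with
  | zero =>
    intro Λ hcard hΛ f hf hb hm ω
    have hΛe : Λ = ∅ := Finset.card_eq_zero.mp (le_antisymm hcard (Nat.zero_le _))
    subst hΛe
    rw [integral_empty_box (hγ.proper ∅ empty_timeBox) f ω,
      integral_empty_box (hγ.proper ∅ empty_timeBox) f (fun _ => u)]
    exact hm fun z => hu (ω z)
  | succ n IH =>
    intro Λ hcard hΛ f hf hb hm ω
    rcases Finset.eq_empty_or_nonempty Λ with rfl | hne
    · rw [integral_empty_box (hγ.proper ∅ empty_timeBox) f ω,
        integral_empty_box (hγ.proper ∅ empty_timeBox) f (fun _ => u)]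
      exact hm fun z => hu (ω z)
    obtain ⟨x, hx, hmax'⟩ := Λ.exists_maximal hne
    have hmax : ∀ y ∈ Λ, ¬ x < y := fun y hy hlt => absurd hlt (not_lt_of_ge (hmax' hy hlt.le))
    obtain ⟨C, hC⟩ := hb
    set Top : S → E := fun _ => u with hTop
    have hΛ' : IsTimeBox (Λ.erase x) := timeBox_erase hΛ hx hmax
    have hxtb : IsTimeBox ({x} : Finset S) := singleton_timeBox x
    have hpk_x := hγ.proper {x} hxtb
    have hpkΛ := hγ.proper Λ hΛ
    have hpkΛ' := hγ.proper (Λ.erase x) hΛ'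
    have hcoe : ((({x} : Finset S)) : Set S) = ({x} : Set S) := Finset.coe_singleton x
    have hWsub : floorB Λ ⊆ floorB ({x} : Finset S) := floor_subset_floor_singleton hx hmax
    have hffs : Measurable[F E (floorB ({x} : Finset S))] f :=
      hf.mono (F_mono hWsub) le_rfl
    set h : (S → E) → ℝ := fun σ => ∫ ξ, f ξ ∂γ {x} σ with hh
    have hCh : ∀ σ, |h σ| ≤ C := fun σ => by
      haveI := hpk_x.prob σ; exact abs_int_le hC
    have hmono_h : Monotone h :=
      single_site_mono hpk_x (fun a ω' η' h' => hyp x a ω' η' h') hffs hC hm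
    have hmeas_hV : Measurable[F E (past ((({x} : Finset S)) : Set S) ∪
        (floorB Λ \ ((({x} : Finset S)) : Set S)))] h :=
      measurable_kernel_integral hpk_x hxtb hWsub hf
    have hsub1 : past ((({x} : Finset S)) : Set S) ∪
        (floorB Λ \ ((({x} : Finset S)) : Set S)) ⊆ floorB (Λ.erase x) := by
      exact Set.union_subset (pastx_subset_floor_erase hΛ hx hmax)
        (floor_diff_subset_floor_erase hΛ hx hmax)
    have hmeas_h : Measurable[F E (floorB (Λ.erase x))] h :=
      hmeas_hV.mono (F_mono hsub1) le_rfl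
    set k : (S → E) → ℝ := fun σ => ∫ ξ, h ξ ∂γ (Λ.erase x) σ with hk
    have hcard' : (Λ.erase x).card ≤ n := by
      rw [Finset.card_erase_of_mem hx]; omega
    have hIH : ∀ σ, k σ ≤ k Top := fun σ =>
      IH (Λ.erase x) hcard' hΛ' h hmeas_h ⟨C, hCh⟩ hmono_h σ
    have hCk : ∀ σ, |k σ| ≤ C := fun σ => by
      haveI := hpkΛ'.prob σ; exact abs_int_le hCh
    have hmeask_V : Measurable[F E (past ((Λ.erase x : Finset S) : Set S) ∪
        ((past ((({x} : Finset S)) : Set S) ∪ (floorB Λ \ ((({x} : Finset S)) : Set S))) \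
          ((Λ.erase x : Finset S) : Set S)))] k :=
      measurable_kernel_integral hpkΛ' hΛ' hsub1 hmeas_hV
    have hVring : past ((Λ.erase x : Finset S) : Set S) ∪
        ((past ((({x} : Finset S)) : Set S) ∪ (floorB Λ \ ((({x} : Finset S)) : Set S))) \
          ((Λ.erase x : Finset S) : Set S)) ⊆ ringB Λ := by
      exact V_subset_ring hΛ hx hmax
    have hmeask : Measurable[F E (floorB Λ)] k :=
      hmeask_V.mono (F_mono (Set.Subset.trans hVring (ring_subset_floor hΛ))) le_rfl
    have hxsub : ({x} : Finset S) ⊆ Λ := Finset.singleton_subset_iff.mpr hx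
    have cons1ω := hγ.consist {x} Λ hxtb hΛ hxsub f hffs ⟨C, hC⟩ ω
    have cons1T := hγ.consist {x} Λ hxtb hΛ hxsub f hffs ⟨C, hC⟩ Top
    have cons2ω := hγ.consist (Λ.erase x) Λ hΛ' hΛ (Finset.erase_subset x Λ) h hmeas_h
      ⟨C, hCh⟩ ω
    have cons2T := hγ.consist (Λ.erase x) Λ hΛ' hΛ (Finset.erase_subset x Λ) h hmeas_h
      ⟨C, hCh⟩ Top
    haveI := hpkΛ.prob ω
    haveI := hpkΛ.prob Top
    have e2 : ∫ σ, k σ ∂γ Λ ω ≤ k Top := by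
      calc ∫ σ, k σ ∂γ Λ ω ≤ ∫ _, k Top ∂γ Λ ω :=
            integral_mono (integrable_of_bdd hpkΛ ω hmeask hCk) (integrable_const _) hIH
      _ = k Top := by rw [integral_const]; simp
    have e3 : ∫ σ, k σ ∂γ Λ Top = k Top := by
      have hae : ∀ᵐ σ ∂γ Λ Top, k σ = k Top := by
        filter_upwards [ae_agree_ring hpkΛ hΛ Top] with σ hσ
        exact eq_of_agree hmeask_V fun z hz => hσ z (hVring hz)
      rw [integral_congr_ae hae, integral_const]; simp
    calc ∫ ξ, f ξ ∂γ Λ ω = ∫ σ, h σ ∂γ Λ ω := cons1ω.symm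
    _ = ∫ σ, k σ ∂γ Λ ω := cons2ω.symm
    _ ≤ k Top := e2
    _ = ∫ σ, k σ ∂γ Λ Top := e3.symm
    _ = ∫ σ, h σ ∂γ Λ Top := cons2T
    _ = ∫ ξ, f ξ ∂γ Λ Top := cons1T

end KeyLemma
/-- Monotonicity in the volume under the maximal boundary condition `⊕`. -/
theorem volume_monotonicity_top {S : Type*} [PartialOrder S] [Countable S]
    {E : Type*} [MeasurableSpace E] [Countable E] [MeasurableSingletonClass E]
    [LinearOrder E]
    (hS : Standing S) (u : E) (hu : ∀ a : E, a ≤ u)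
    (γ : ∀ Λ : Finset S, (S → E) → BoxMeasure E Λ) (hγ : IsPOS E γ)
    (hyp : ∀ (y : S) (a : E) (ω η : S → E), ω ≤ η →
      γ ({y} : Finset S) ω {σ | a ≤ σ y} ≤ γ ({y} : Finset S) η {σ | a ≤ σ y})
    (Λ Δ : Finset S) (hΛ : IsTimeBox Λ) (hΔ : IsTimeBox Δ) (hsub : Λ ⊆ Δ)
    (hfut : future (Λ : Set S) ∩ (Δ : Set S) = ∅)
    (f : (S → E) → ℝ) (hf : Measurable[F E ((Λ : Set S))] f)
    (hb : Bounded f) (hm : Monotone f) :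
    ∫ ξ, f ξ ∂(γ Δ (fun _ => u)) ≤ ∫ ξ, f ξ ∂(γ Λ (fun _ => u)) := by
  classical
  obtain ⟨C, hC⟩ := hb
  set Top : S → E := fun _ => u with hTop
  have hpkΔ := hγ.proper Δ hΔ
  have hpkΛ := hγ.proper Λ hΛ
  haveI := hpkΔ.prob Top
  haveI := hpkΛ.prob Top
  have hff : Measurable[F E (floorB Λ)] f := hf.mono (F_mono (coe_subset_floor hΛ)) le_rfl
  have cons := hγ.consist Λ Δ hΛ hΔ hsub f hff ⟨C, hC⟩ Top
  set k : (S → E) → ℝ := fun σ => ∫ ξ, f ξ ∂γ Λ σ with hk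
  have hkey : ∀ σ, k σ ≤ k Top := fun σ =>
    key_mono hγ u hu hyp Λ.card Λ le_rfl hΛ f hff ⟨C, hC⟩ hm σ
  have hCk : ∀ σ, |k σ| ≤ C := fun σ => by
    haveI := hpkΛ.prob σ; exact abs_int_le hC
  have hmeasV : Measurable[F E (past (Λ : Set S) ∪ ((Λ : Set S) \ (Λ : Set S)))] k :=
    measurable_kernel_integral hpkΛ hΛ (coe_subset_floor hΛ) hf
  have hsubV : past (Λ : Set S) ∪ ((Λ : Set S) \ (Λ : Set S)) ⊆ floorB Δ := by
    rw [Set.diff_self, Set.union_empty]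
    exact past_subset_floor_of_subset hΔ hsub
  have hmeask : Measurable[F E (floorB Δ)] k := hmeasV.mono (F_mono hsubV) le_rfl
  calc ∫ ξ, f ξ ∂γ Δ Top = ∫ σ, k σ ∂γ Δ Top := cons.symm
  _ ≤ ∫ _, k Top ∂γ Δ Top :=
      integral_mono (integrable_of_bdd hpkΔ Top hmeask hCk) (integrable_const _) hkey
  _ = k Top := by rw [integral_const]; simp
end POCpaper
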